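/- arXiv:1109.4834 — 3 statements merged into one kernel-verified Lean document; each statement's English description precedes it below -/
import Mathlib

section
/- With T, ψ, b, K, K^⊥ as in the context: if x ∈ T is such that b(x,k₀) ∉ ℤ for some k₀ ∈ K (i.e. x ∉ K^⊥), then the sum over the coset x + K vanishes: Σ_{k∈K} exp(2πi·ψ(x+k)) = 0. -/
open Complex Real

/-- If `x ∉ K^⊥`, i.e. `b x k₀ ∉ ℤ` for some `k₀ ∈ K`, then the partial Gauss sum over
the coset `x + K` vanishes: `∑_{k ∈ K} exp(2πi ψ(x+k)) = 0`. -/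
theorem gauss_sum_coset_vanishes
    {T : Type*} [AddCommGroup T] [Fintype T] [DecidableEq T]
    (ψ : T → ℝ) (b : T → T → ℝ)
    (hquad : ∀ x y : T, ∃ n : ℤ, ψ (x + y) - ψ x - ψ y - b x y = (n : ℝ))
    (hbr : ∀ x y z : T, ∃ n : ℤ, b x (y + z) - b x y - b x z = (n : ℝ))
    (hbl : ∀ x y z : T, ∃ n : ℤ, b (x + y) z - b x z - b y z = (n : ℝ))
    (K : AddSubgroup T) [DecidablePred (· ∈ K)]
    (hK : ∀ k ∈ K, ∃ n : ℤ, ψ k = (n : ℝ))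
    (x : T) (k₀ : T) (hk₀ : k₀ ∈ K) (hnot : ¬ ∃ n : ℤ, b x k₀ = (n : ℝ)) :
    ∑ k ∈ Finset.univ.filter (· ∈ K),
      Complex.exp (2 * Real.pi * Complex.I * (ψ (x + k))) = 0 := by
  set S := ∑ k ∈ Finset.univ.filter (· ∈ K),
      Complex.exp (2 * Real.pi * Complex.I * (ψ (x + k))) with hS
  set c : ℂ := Complex.exp (2 * Real.pi * Complex.I * (b x k₀ : ℝ)) with hc
  have hmain : ∀ k ∈ K, ∃ N : ℤ,
      ψ (x + (k + k₀)) = ψ (x + k) + b x k₀ + (N : ℝ) := by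
    intro k hk
    obtain ⟨n₁, hn₁⟩ := hquad (x + k) k₀
    obtain ⟨n₂, hn₂⟩ := hbl x k k₀
    obtain ⟨n₃, hn₃⟩ := hquad k k₀
    obtain ⟨m₁, hm₁⟩ := hK (k + k₀) (K.add_mem hk hk₀)
    obtain ⟨m₂, hm₂⟩ := hK k hk
    obtain ⟨m₃, hm₃⟩ := hK k₀ hk₀
    refine ⟨n₁ + n₂ + m₁ - m₂ - n₃, ?_⟩
    have hx : x + (k + k₀) = (x + k) + k₀ := by abel
    rw [hx]
    push_cast
    linarith [hn₁, hn₂, hn₃, hm₁, hm₂, hm₃]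
  have key : S = c * S := by
    rw [hS, Finset.mul_sum]
    refine Finset.sum_nbij' (fun k => k - k₀) (fun k => k + k₀) ?_ ?_ ?_ ?_ ?_
    · intro a ha
      simp only [Finset.mem_filter, Finset.mem_univ, true_and] at ha ⊢
      exact K.sub_mem ha hk₀
    · intro a ha
      simp only [Finset.mem_filter, Finset.mem_univ, true_and] at ha ⊢
      exact K.add_mem ha hk₀
    · intro a _; simp
    · intro a _; simp
    · intro k hk
      simp only [Finset.mem_filter, Finset.mem_univ, true_and] at hk
      obtain ⟨N, hN⟩ := hmain (k - k₀) (K.sub_mem hk hk₀)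
      rw [sub_add_cancel] at hN
      rw [hN, hc, Complex.ofReal_add, Complex.ofReal_add, Complex.ofReal_intCast,
        mul_add, mul_add, Complex.exp_add, Complex.exp_add]
      have h1 : Complex.exp (2 * (Real.pi : ℂ) * Complex.I * (N : ℂ)) = 1 := by
        rw [mul_comm]
        exact Complex.exp_int_mul_two_pi_mul_I N
      rw [h1, mul_one]
      ring
  have hc1 : c ≠ 1 := by
    intro h
    rw [hc, Complex.exp_eq_one_iff] at h
    obtain ⟨n, hn⟩ := h
    apply hnot
    refine ⟨n, ?_⟩
    have h2 : (2 * (Real.pi : ℂ) * Complex.I) ≠ 0 := by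
      simp [Real.pi_ne_zero, Complex.I_ne_zero]
    have h3 : (b x k₀ : ℂ) = (n : ℂ) :=
      mul_left_cancel₀ h2 (by linear_combination hn)
    exact_mod_cast h3
  have h0 : (1 - c) * S = 0 := by linear_combination key
  rcases mul_eq_zero.mp h0 with h | h
  · exact absurd (by linear_combination -h : c = 1) hc1
  · exact h
end

section
/- With T, ψ, b, K, K^⊥ as in the context: the Gauss sum over T equals the Gauss sum over K^⊥, i.e. Σ_{x∈T} exp(2πi·ψ(x)) = Σ_{x∈K^⊥} exp(2πi·ψ(x)). -/
open Complex Real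

noncomputable def ee (r : ℝ) : ℂ := Complex.exp (2 * Real.pi * Complex.I * r)

lemma ee_add (r s : ℝ) : ee (r + s) = ee r * ee s := by
  simp [ee, mul_add, Complex.exp_add]

lemma ee_int (n : ℤ) : ee (n : ℝ) = 1 := by
  have h := Complex.exp_int_mul_two_pi_mul_I n
  rw [ee, show (2 * (Real.pi : ℂ) * Complex.I * ((n : ℝ) : ℂ)) = (n : ℂ) * (2 * Real.pi * Complex.I) by push_cast; ring]
  exact h

lemma ee_eq_one {r : ℝ} (h : ∃ n : ℤ, r = (n : ℝ)) : ee r = 1 := by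
  obtain ⟨n, rfl⟩ := h; exact ee_int n

lemma ee_ne_one {r : ℝ} (h : ¬ ∃ n : ℤ, r = (n : ℝ)) : ee r ≠ 1 := by
  intro h1
  rw [ee, Complex.exp_eq_one_iff] at h1
  obtain ⟨n, hn⟩ := h1
  apply h
  refine ⟨n, ?_⟩
  have h2 : (2 * (Real.pi : ℂ) * Complex.I) * (r : ℂ)
      = (2 * (Real.pi : ℂ) * Complex.I) * (n : ℂ) := by
    rw [show (2 * (Real.pi : ℂ) * Complex.I) * (r : ℂ) = 2 * (Real.pi : ℂ) * Complex.I * (r:ℂ) by ring, hn]; ring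
  have h3 := mul_left_cancel₀ Complex.two_pi_I_ne_zero h2
  exact_mod_cast h3

/-- The Gauss sum of `ψ` over `T` equals the Gauss sum over
`K^⊥ = {x | ∀ k ∈ K, b x k ∈ ℤ}`:  `∑_{x∈T} e^{2πiψ(x)} = ∑_{x∈K^⊥} e^{2πiψ(x)}`. -/
theorem gauss_sum_eq_sum_over_Kperp
    {T : Type*} [AddCommGroup T] [Fintype T] [DecidableEq T]
    (ψ : T → ℝ) (b : T → T → ℝ)
    (hquad : ∀ x y : T, ∃ n : ℤ, ψ (x + y) - ψ x - ψ y - b x y = (n : ℝ))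
    (hbr : ∀ x y z : T, ∃ n : ℤ, b x (y + z) - b x y - b x z = (n : ℝ))
    (hbl : ∀ x y z : T, ∃ n : ℤ, b (x + y) z - b x z - b y z = (n : ℝ))
    (K : AddSubgroup T)
    (hK : ∀ k ∈ K, ∃ n : ℤ, ψ k = (n : ℝ))
    [DecidablePred fun x : T => ∀ k ∈ K, ∃ n : ℤ, b x k = (n : ℝ)] :
    ∑ x : T, Complex.exp (2 * Real.pi * Complex.I * (ψ x)) =
      ∑ x ∈ Finset.univ.filter (fun x : T => ∀ k ∈ K, ∃ n : ℤ, b x k = (n : ℝ)),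
        Complex.exp (2 * Real.pi * Complex.I * (ψ x)) := by
  classical
  show ∑ x : T, ee (ψ x) =
      ∑ x ∈ Finset.univ.filter (fun x : T => ∀ k ∈ K, ∃ n : ℤ, b x k = (n : ℝ)), ee (ψ x)
  have key : ∀ x y : T, ee (ψ (x + y)) = ee (ψ x) * ee (ψ y) * ee (b x y) := by
    intro x y
    obtain ⟨n, hn⟩ := hquad x y
    have h : ψ (x + y) = ψ x + ψ y + b x y + n := by linarith
    rw [h, ee_add, ee_add, ee_add, ee_int n, mul_one]
  have keyb : ∀ x y z : T, ee (b x (y + z)) = ee (b x y) * ee (b x z) := by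
    intro x y z
    obtain ⟨n, hn⟩ := hbr x y z
    have h : b x (y + z) = b x y + b x z + n := by linarith
    rw [h, ee_add, ee_add, ee_int n, mul_one]
  set S : T → ℂ := fun x => ∑ k : K, ee (b x k) with hSdef
  have hS : ∀ x : T, S x =
      (if (∀ k ∈ K, ∃ n : ℤ, b x k = (n : ℝ)) then (Fintype.card K : ℂ) else 0) := by
    intro x
    split_ifs with h
    · simp only [hSdef]
      have h1 : ∀ k : K, ee (b x (k : T)) = 1 := fun k => ee_eq_one (h k.1 k.2)
      simp [h1]
    · push_neg at h
      obtain ⟨k0, hk0, hk0'⟩ := h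
      have hne : ee (b x k0) ≠ 1 := ee_ne_one (by push_neg; exact hk0')
      have hshift : S x * ee (b x k0) = S x := by
        simp only [hSdef, Finset.sum_mul]
        have h1 : ∀ k : K, ee (b x (k : T)) * ee (b x k0) = ee (b x ((k + ⟨k0, hk0⟩ : K) : T)) := by
          intro k
          rw [show (((k + ⟨k0, hk0⟩ : K)) : T) = (k : T) + k0 from rfl, keyb]
        rw [Finset.sum_congr rfl (fun k _ => h1 k)]
        exact Fintype.sum_equiv (Equiv.addRight (⟨k0, hk0⟩ : K)) _ _ (fun k => rfl)
      have : S x * (ee (b x k0) - 1) = 0 := by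
        rw [mul_sub, hshift, mul_one, sub_self]
      rcases mul_eq_zero.mp this with h' | h'
      · exact h'
      · exact absurd (sub_eq_zero.mp h') hne
  have main : (Fintype.card K : ℂ) * ∑ x : T, ee (ψ x) = ∑ x : T, ee (ψ x) * S x := by
    have step1 : ∀ x : T, ee (ψ x) * S x = ∑ k : K, ee (ψ (x + (k : T))) := by
      intro x
      simp only [hSdef, Finset.mul_sum]
      refine Finset.sum_congr rfl (fun k _ => ?_)
      rw [key x k, ee_eq_one (hK k k.2), mul_one]
    have shift : ∀ k : K, ∑ x : T, ee (ψ (x + (k : T))) = ∑ x : T, ee (ψ x) :=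
      fun k => Fintype.sum_equiv (Equiv.addRight (k : T)) _ _ (fun x => rfl)
    rw [Finset.sum_congr rfl (fun x _ => step1 x), Finset.sum_comm]
    rw [Finset.sum_congr rfl (fun k _ => shift k), Finset.sum_const, Finset.card_univ,
      nsmul_eq_mul]
  have main2 : ∑ x : T, ee (ψ x) * S x =
      (Fintype.card K : ℂ) *
        ∑ x ∈ Finset.univ.filter (fun x : T => ∀ k ∈ K, ∃ n : ℤ, b x k = (n : ℝ)), ee (ψ x) := by
    calc ∑ x : T, ee (ψ x) * S x
        = ∑ x : T, (if (∀ k ∈ K, ∃ n : ℤ, b x k = (n : ℝ)) then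
            (Fintype.card K : ℂ) * ee (ψ x) else 0) := by
          refine Finset.sum_congr rfl fun x _ => ?_
          rw [hS x]; split_ifs <;> ring
      _ = _ := by rw [Finset.mul_sum, Finset.sum_filter]
  have hcard : ((Fintype.card K : ℂ)) ≠ 0 := by
    exact_mod_cast (Nat.cast_ne_zero (R := ℂ)).mpr Fintype.card_ne_zero
  exact mul_left_cancel₀ hcard (main.trans main2)
end

section
/- With T, ψ, b, K, K^⊥ as in the context: if R ⊆ K^⊥ is a complete set of coset representatives of K in K^⊥ (each coset x + K with x ∈ K^⊥ contains exactly one element of R), then Σ_{x∈T} exp(2πi·ψ(x)) = |K| · Σ_{r∈R} exp(2πi·ψ(r)). -/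
open Complex Real

noncomputable def eChar (t : ℝ) : ℂ := Complex.exp (2 * Real.pi * Complex.I * t)

lemma eChar_add (s t : ℝ) : eChar (s + t) = eChar s * eChar t := by
  simp only [eChar, Complex.ofReal_add, mul_add, Complex.exp_add]

lemma eChar_int (n : ℤ) : eChar (n : ℝ) = 1 := by
  rw [eChar, show (2 * (Real.pi : ℂ) * Complex.I * ((n : ℝ) : ℂ)) =
    (n : ℂ) * (2 * (Real.pi : ℂ) * Complex.I) by push_cast; ring]
  exact Complex.exp_int_mul_two_pi_mul_I n

lemma eChar_congr {s t : ℝ} (h : ∃ n : ℤ, s - t = (n : ℝ)) : eChar s = eChar t := by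
  obtain ⟨n, hn⟩ := h
  have hs : s = t + (n : ℝ) := by linarith
  rw [hs, eChar_add, eChar_int, mul_one]

lemma eChar_eq_one {t : ℝ} (h : eChar t = 1) : ∃ n : ℤ, t = (n : ℝ) := by
  rw [eChar, Complex.exp_eq_one_iff] at h
  obtain ⟨n, hn⟩ := h
  refine ⟨n, ?_⟩
  have h2 : (2 * (Real.pi : ℂ) * Complex.I) ≠ 0 := by
    simp [Real.pi_ne_zero, Complex.I_ne_zero]
  have h3 : (2 * (Real.pi : ℂ) * Complex.I) * ((t : ℝ) : ℂ) =
      (2 * (Real.pi : ℂ) * Complex.I) * (n : ℂ) := by rw [hn]; ring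
  have := mul_left_cancel₀ h2 h3
  exact_mod_cast this

/-- Reduction formula `G(ψ) = |K| · G(ψ|_{K^⊥/K})`: if `R ⊆ K^⊥` is a complete set of
coset representatives of `K` in `K^⊥` (each coset `x + K` with `x ∈ K^⊥` contains exactly
one element of `R`), then `∑_{x∈T} e^{2πiψ(x)} = |K| · ∑_{r∈R} e^{2πiψ(r)}`. -/
theorem gauss_sum_reduction
    {T : Type*} [AddCommGroup T] [Fintype T] [DecidableEq T]
    (ψ : T → ℝ) (b : T → T → ℝ)
    (hquad : ∀ x y : T, ∃ n : ℤ, ψ (x + y) - ψ x - ψ y - b x y = (n : ℝ))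
    (hbr : ∀ x y z : T, ∃ n : ℤ, b x (y + z) - b x y - b x z = (n : ℝ))
    (hbl : ∀ x y z : T, ∃ n : ℤ, b (x + y) z - b x z - b y z = (n : ℝ))
    (K : AddSubgroup T)
    (hK : ∀ k ∈ K, ∃ n : ℤ, ψ k = (n : ℝ))
    (R : Finset T)
    (hRperp : ∀ r ∈ R, ∀ k ∈ K, ∃ n : ℤ, b r k = (n : ℝ))
    (hreps : ∀ x : T, (∀ k ∈ K, ∃ n : ℤ, b x k = (n : ℝ)) →
      ∃! r, r ∈ R ∧ x - r ∈ K) :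
    ∑ x : T, Complex.exp (2 * Real.pi * Complex.I * (ψ x)) =
      (Nat.card K : ℂ) * ∑ r ∈ R, Complex.exp (2 * Real.pi * Complex.I * (ψ r)) := by
  classical
  haveI : Fintype K := Fintype.ofFinite K
  haveI : Nonempty K := ⟨0⟩
  -- restate in terms of eChar
  show ∑ x : T, eChar (ψ x) = (Nat.card K : ℂ) * ∑ r ∈ R, eChar (ψ r)
  have hcard : (Nat.card K : ℂ) = (Fintype.card K : ℂ) := by
    rw [Nat.card_eq_fintype_card]
  -- the perp predicate
  set P : T → Prop := fun x => ∀ k ∈ K, ∃ n : ℤ, b x k = (n : ℝ) with hPdefn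
  -- b is integral on K × K
  have hKK : ∀ k ∈ K, ∀ k' ∈ K, ∃ n : ℤ, b k k' = (n : ℝ) := by
    intro k hk k' hk'
    obtain ⟨n, hn⟩ := hquad k k'
    obtain ⟨a, ha⟩ := hK k hk
    obtain ⟨a', ha'⟩ := hK k' hk'
    obtain ⟨d, hd⟩ := hK _ (K.add_mem hk hk')
    exact ⟨d - a - a' - n, by push_cast; linarith⟩
  -- P is closed under adding elements of K
  have hPadd : ∀ x : T, P x → ∀ k ∈ K, P (x + k) := by
    intro x hx k hk k' hk'
    obtain ⟨n, hn⟩ := hbl x k k'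
    obtain ⟨m, hm⟩ := hx k' hk'
    obtain ⟨m', hm'⟩ := hKK k hk k' hk'
    exact ⟨n + m + m', by push_cast; linarith⟩
  -- translation formula for eChar ∘ ψ
  have hfadd : ∀ x : T, ∀ k ∈ K, eChar (ψ (x + k)) = eChar (ψ x) * eChar (b x k) := by
    intro x k hk
    rw [← eChar_add]
    apply eChar_congr
    obtain ⟨n, hn⟩ := hquad x k
    obtain ⟨m, hm⟩ := hK k hk
    exact ⟨n + m, by push_cast; linarith⟩
  -- the character relation
  have hchi : ∀ x k k' : T, eChar (b x (k + k')) = eChar (b x k) * eChar (b x k') := by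
    intro x k k'
    rw [← eChar_add]
    apply eChar_congr
    obtain ⟨n, hn⟩ := hbr x k k'
    exact ⟨n, by linarith⟩
  -- inner character sum
  have hS : ∀ x : T, (∑ k : K, eChar (b x (k : T))) =
      if P x then (Fintype.card K : ℂ) else 0 := by
    intro x
    by_cases hx : P x
    · rw [if_pos hx]
      have hone : ∀ k ∈ (Finset.univ : Finset K), eChar (b x (k : T)) = 1 := by
        intro k _
        obtain ⟨n, hn⟩ := hx (k : T) k.2
        rw [hn, eChar_int]
      rw [Finset.sum_congr rfl hone, Finset.sum_const, Finset.card_univ,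
        nsmul_eq_mul, mul_one]
    · rw [if_neg hx]
      simp only [hPdefn, not_forall] at hx
      obtain ⟨k0, hk0, hbad⟩ := hx
      have h1 : eChar (b x k0) ≠ 1 := fun h => hbad (eChar_eq_one h)
      have hshift : (∑ k : K, eChar (b x (k : T))) =
          eChar (b x k0) * ∑ k : K, eChar (b x (k : T)) := by
        rw [Finset.mul_sum]
        refine Fintype.sum_equiv (Equiv.addLeft (-(⟨k0, hk0⟩ : K))) _ _ (fun k => ?_)
        simp only [Equiv.coe_addLeft]
        rw [show (((-(⟨k0, hk0⟩ : K)) + k : K) : T) = -k0 + (k : T) from rfl,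
          ← hchi x k0 (-k0 + (k : T)), add_neg_cancel_left]
      have hzero : (eChar (b x k0) - 1) * (∑ k : K, eChar (b x (k : T))) = 0 := by
        rw [sub_mul, one_mul, ← hshift, sub_self]
      rcases mul_eq_zero.mp hzero with h | h
      · exact absurd (sub_eq_zero.mp h) h1
      · exact h
  -- step 1: |K| · G = ∑_x f(x) · S(x)
  have h1 : (Fintype.card K : ℂ) * ∑ x : T, eChar (ψ x)
      = ∑ x : T, eChar (ψ x) * ∑ k : K, eChar (b x (k : T)) := by
    calc (Fintype.card K : ℂ) * ∑ x : T, eChar (ψ x)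
        = ∑ _k : K, ∑ x : T, eChar (ψ x) := by
          rw [Finset.sum_const, Finset.card_univ, nsmul_eq_mul]
      _ = ∑ k : K, ∑ x : T, eChar (ψ (x + k)) := by
          refine Finset.sum_congr rfl fun k _ => ?_
          exact (Fintype.sum_equiv (Equiv.addRight (k : T)) _ _ (fun x => rfl)).symm
      _ = ∑ k : K, ∑ x : T, eChar (ψ x) * eChar (b x (k : T)) := by
          refine Finset.sum_congr rfl fun k _ => Finset.sum_congr rfl fun x _ =>
            hfadd x k k.2
      _ = ∑ x : T, ∑ k : K, eChar (ψ x) * eChar (b x (k : T)) := Finset.sum_comm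
      _ = ∑ x : T, eChar (ψ x) * ∑ k : K, eChar (b x (k : T)) := by
          refine Finset.sum_congr rfl fun x _ => (Finset.mul_sum _ _ _).symm
  -- step 2: kill the non-perp terms
  have h2 : ∑ x : T, eChar (ψ x) * ∑ k : K, eChar (b x (k : T))
      = (Fintype.card K : ℂ) * ∑ x ∈ Finset.univ.filter P, eChar (ψ x) := by
    rw [Finset.mul_sum, Finset.sum_filter]
    refine Finset.sum_congr rfl fun x _ => ?_
    rw [hS x]
    by_cases hx : P x
    · rw [if_pos hx, if_pos hx, mul_comm]
    · rw [if_neg hx, if_neg hx, mul_zero]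
  -- representative function
  have hex : ∀ x : T, ∃ r, ¬ P x ∨ (r ∈ R ∧ x - r ∈ K) := by
    intro x
    by_cases hx : P x
    · obtain ⟨r, hr⟩ := (hreps x hx).exists
      exact ⟨r, Or.inr hr⟩
    · exact ⟨0, Or.inl hx⟩
  choose rep hrep using hex
  have hrep' : ∀ x : T, P x → rep x ∈ R ∧ x - rep x ∈ K := by
    intro x hx
    exact (hrep x).resolve_left (not_not_intro hx)
  -- step 3: split the perp sum over cosets
  have hsplit : ∑ p ∈ R ×ˢ (Finset.univ : Finset K), eChar (ψ (p.1 + (p.2 : T)))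
      = ∑ x ∈ Finset.univ.filter P, eChar (ψ x) := by
    refine Finset.sum_bij' (fun p _ => p.1 + (p.2 : T))
      (fun x hx => (rep x, (⟨x - rep x,
        (hrep' x (Finset.mem_filter.mp hx).2).2⟩ : K)))
      ?_ ?_ ?_ ?_ ?_
    · intro p hp
      obtain ⟨hp1, _⟩ := Finset.mem_product.mp hp
      refine Finset.mem_filter.mpr ⟨Finset.mem_univ _, ?_⟩
      exact hPadd p.1 (hRperp p.1 hp1) (p.2 : T) p.2.2
    · intro x hx
      exact Finset.mem_product.mpr
        ⟨(hrep' x (Finset.mem_filter.mp hx).2).1, Finset.mem_univ _⟩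
    · intro p hp
      obtain ⟨hp1, _⟩ := Finset.mem_product.mp hp
      have hPx : P (p.1 + (p.2 : T)) := hPadd p.1 (hRperp p.1 hp1) (p.2 : T) p.2.2
      have huniq : p.1 = rep (p.1 + (p.2 : T)) := by
        refine (hreps _ hPx).unique ⟨hp1, ?_⟩ (hrep' _ hPx)
        simp
      refine Prod.ext ?_ ?_
      · exact huniq.symm
      · apply Subtype.ext
        show p.1 + (p.2 : T) - rep (p.1 + (p.2 : T)) = (p.2 : T)
        rw [← huniq]; abel
    · intro x hx
      show rep x + (x - rep x) = x
      abel
    · intro p hp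
      rfl
  have h3 : ∑ x ∈ Finset.univ.filter P, eChar (ψ x)
      = (Fintype.card K : ℂ) * ∑ r ∈ R, eChar (ψ r) := by
    rw [← hsplit, Finset.sum_product]
    have hinner : ∀ r ∈ R, ∑ k : K, eChar (ψ (r + (k : T)))
        = (Fintype.card K : ℂ) * eChar (ψ r) := by
      intro r hr
      calc ∑ k : K, eChar (ψ (r + (k : T)))
          = ∑ _k : K, eChar (ψ r) := by
            refine Finset.sum_congr rfl fun k _ => ?_
            rw [hfadd r (k : T) k.2]
            obtain ⟨n, hn⟩ := hRperp r hr (k : T) k.2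
            rw [hn, eChar_int, mul_one]
        _ = (Fintype.card K : ℂ) * eChar (ψ r) := by
            rw [Finset.sum_const, Finset.card_univ, nsmul_eq_mul]
    rw [Finset.sum_congr rfl hinner, ← Finset.mul_sum]
  -- conclude
  have hc0 : (Fintype.card K : ℂ) ≠ 0 := by
    exact_mod_cast Nat.cast_ne_zero.mpr Fintype.card_ne_zero
  rw [hcard]
  apply mul_left_cancel₀ hc0
  rw [h1, h2, h3]
end
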